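/- An SDC method (A⁰_Δ, A¹_Δ, …, A^K_Δ, A, b) with constant initial guess (A⁰_Δ arbitrary, stages initialized u^{[0,i]} = u_n) satisfies α^{[K]}(τ) = β(τ) for all trees τ with ht(τ) ≤ K; in particular its SDC order p_K (largest p such that α^{[K]}(τ) = β(τ) for all |τ| ≤ p) satisfies p_K ≥ K. -/

import Mathlib

inductive RTree where
  | node : List RTree → RTree

namespace RTree

def size : RTree → ℕ
  | .node ts => 1 + (ts.attach.map (fun x => size x.1)).sum
decreasing_by
  have := List.sizeOf_lt_of_mem x.2; simp only [RTree.node.sizeOf_spec]; omega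

def height : RTree → ℕ
  | .node ts => 1 + (ts.attach.map (fun x => height x.1)).foldr max 0
decreasing_by
  have := List.sizeOf_lt_of_mem x.2; simp only [RTree.node.sizeOf_spec]; omega

def isBamboo : RTree → Prop
  | .node [] => True
  | .node [t] => isBamboo t
  | .node (_ :: _ :: _) => False

def bamboo : ℕ → RTree
  | 0 => .node []
  | n + 1 => .node [bamboo n]

def factorial : RTree → ℕ
  | .node ts => (RTree.node ts).size * (ts.attach.map (fun x => factorial x.1)).prod
decreasing_by
  have := List.sizeOf_lt_of_mem x.2; simp only [RTree.node.sizeOf_spec]; omega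

end RTree

open scoped BigOperators

namespace RTree

theorem induction_node {motive : RTree → Prop}
    (node : ∀ ts, (∀ t ∈ ts, motive t) → motive (.node ts)) : ∀ τ, motive τ
  | .node ts => node ts fun t _ => induction_node node t

theorem size_node (ts : List RTree) : (node ts).size = 1 + (ts.map size).sum := by
  rw [size]; simp

theorem height_node (ts : List RTree) :
    (node ts).height = 1 + (ts.map height).foldr max 0 := by
  rw [height]; simp

theorem one_le_height (τ : RTree) : 1 ≤ τ.height := by
  cases τ; rw [height_node]; omega

theorem height_lt_of_mem {t : RTree} {ts : List RTree} (ht : t ∈ ts) :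
    t.height < (node ts).height := by
  rw [height_node, Nat.lt_one_add_iff]
  exact List.le_max_of_le (List.mem_map_of_mem ht) le_rfl

theorem height_le_size : ∀ τ : RTree, τ.height ≤ τ.size :=
  induction_node fun ts ih => by
    rw [height_node, size_node, Nat.add_le_add_iff_left]
    refine List.max_le_of_forall_le _ _ fun h hh => ?_
    obtain ⟨t, ht, rfl⟩ := List.mem_map.mp hh
    exact (ih t ht).trans (List.le_sum_of_mem (List.mem_map_of_mem ht))

end RTree

section SDCWeights

variable {R : Type*} [CommRing R] {s K : ℕ} {a : Fin s → Fin s → R}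
  {aΔ : ℕ → Fin s → Fin s → R} {βi : Fin s → RTree → R} {α : ℕ → Fin s → RTree → R}

/-- Each sweep raises by one the height up to which the stage weights are exact: the
recursion for `α k` only evaluates `α (k - 1)` and `α k` on subtrees, which are lower. -/
theorem sdc_stage_weight_eq_of_height_le
    (hβi : ∀ i, ∀ π : List RTree, βi i (.node π) = ∑ j, a i j * (π.map (βi j)).prod)
    (hrec : ∀ k, 1 ≤ k → k ≤ K → ∀ i, ∀ π : List RTree, α k i (.node π) =
      (∑ j, (a i j - aΔ k i j) * (π.map (α (k - 1) j)).prod) +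
        ∑ j, aΔ k i j * (π.map (α k j)).prod) :
    ∀ τ : RTree, ∀ k ≤ K, τ.height ≤ k → ∀ i, α k i τ = βi i τ :=
  RTree.induction_node fun π ih k hkK hπ i => by
    have hk : 1 ≤ k := (RTree.one_le_height _).trans hπ
    have hchild : ∀ t ∈ π, t.height ≤ k - 1 := fun t ht => by
      have := RTree.height_lt_of_mem ht; omega
    have hprev : ∀ j, π.map (α (k - 1) j) = π.map (βi j) := fun j =>
      List.map_congr_left fun t ht => ih t ht (k - 1) (by omega) (hchild t ht) j
    have hcur : ∀ j, π.map (α k j) = π.map (βi j) := fun j =>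
      List.map_congr_left fun t ht => ih t ht k hkK ((hchild t ht).trans (Nat.sub_le k 1)) j
    simp only [hrec k hk hkK, hβi, hprev, hcur, ← Finset.sum_add_distrib, ← add_mul,
      sub_add_cancel]

end SDCWeights

theorem sdc_order_at_least_K_general (s K : ℕ) (b : Fin s → ℝ)
    (a : Fin s → Fin s → ℝ) (aΔ : ℕ → Fin s → Fin s → ℝ)
    (β : RTree → ℝ) (βi : Fin s → RTree → ℝ)
    (α : ℕ → Fin s → RTree → ℝ) (αout : RTree → ℝ)
    (hβ : ∀ π : List RTree, β (.node π) = ∑ i, b i * (π.map (βi i)).prod)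
    (hβi : ∀ i, ∀ π : List RTree, βi i (.node π) = ∑ j, a i j * (π.map (βi j)).prod)
    (hrec : ∀ k, 1 ≤ k → k ≤ K → ∀ i, ∀ π : List RTree, α k i (.node π) =
      (∑ j, (a i j - aΔ k i j) * (π.map (α (k - 1) j)).prod) +
        ∑ j, aΔ k i j * (π.map (α k j)).prod)
    (hout : ∀ π : List RTree, αout (.node π) = ∑ i, b i * (π.map (α K i)).prod) :
    (∀ τ : RTree, τ.height ≤ K → αout τ = β τ) ∧
      (∀ τ : RTree, τ.size ≤ K → αout τ = β τ) := by
  have stage := sdc_stage_weight_eq_of_height_le hβi hrec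
  have height_order : ∀ τ : RTree, τ.height ≤ K → αout τ = β τ := by
    rintro ⟨π⟩ hπ
    have hchildren : ∀ i, π.map (α K i) = π.map (βi i) := fun i =>
      List.map_congr_left fun t ht =>
        stage t K le_rfl ((RTree.height_lt_of_mem ht).le.trans hπ) i
    simp only [hout, hβ, hchildren]
  exact ⟨height_order, fun τ hτ => height_order τ ((RTree.height_le_size τ).trans hτ)⟩

/-- An SDC method with K iterations and constant initial guess has height order at
least K and hence SDC order at least K. -/
theorem sdc_order_at_least_K (s K : ℕ) (b : Fin s → ℝ)
    (a : Fin s → Fin s → ℝ) (aΔ : ℕ → Fin s → Fin s → ℝ)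
    (β : RTree → ℝ) (βi : Fin s → RTree → ℝ)
    (α : ℕ → Fin s → RTree → ℝ) (αout : RTree → ℝ)
    (hβ : ∀ π : List RTree, β (.node π) = ∑ i, b i * (π.map (βi i)).prod)
    (hβi : ∀ i, ∀ π : List RTree, βi i (.node π) = ∑ j, a i j * (π.map (βi j)).prod)
    (h0 : ∀ i, ∀ τ : RTree, α 0 i τ = 0)
    (hrec : ∀ k, 1 ≤ k → k ≤ K → ∀ i, ∀ π : List RTree, α k i (.node π) =
      (∑ j, (a i j - aΔ k i j) * (π.map (α (k - 1) j)).prod) +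
        ∑ j, aΔ k i j * (π.map (α k j)).prod)
    (hout : ∀ π : List RTree, αout (.node π) = ∑ i, b i * (π.map (α K i)).prod) :
    (∀ τ : RTree, τ.height ≤ K → αout τ = β τ) ∧
      (∀ τ : RTree, τ.size ≤ K → αout τ = β τ) :=
  sdc_order_at_least_K_general s K b a aΔ β βi α αout hβ hβi hrec hout
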